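/- The two-way infinite path has locating chromatic number 3: it admits a locating 3-coloring but no locating 2-coloring. -/
import Mathlib


open Set

/-- The distance from a vertex `v` to the color class of color `i`. -/
noncomputable def distClass {V : Type*} (G : SimpleGraph V) {t : ℕ}
    (c : V → Fin t) (v : V) (i : Fin t) : ℕ :=
  sInf {m : ℕ | ∃ x, c x = i ∧ G.dist v x = m}

/-- A locating coloring: a proper coloring in which all vertices have
pairwise distinct color codes. -/
noncomputable def IsLocatingColoring {V : Type*} (G : SimpleGraph V) {t : ℕ}
    (c : V → Fin t) : Prop :=
  (∀ u v, G.Adj u v → c u ≠ c v) ∧ Function.Injective (fun v => distClass G c v)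

/-- The two-way infinite path on vertex set `ℤ`. -/
def twoWayPath : SimpleGraph ℤ := SimpleGraph.fromRel (fun a b => b = a + 1)

lemma adj_iff (a b : ℤ) : twoWayPath.Adj a b ↔ (a - b).natAbs = 1 := by
  simp only [twoWayPath, SimpleGraph.fromRel_adj]
  omega

lemma exists_walk (n : ℕ) : ∀ a b : ℤ, (a - b).natAbs = n → ∃ p : twoWayPath.Walk a b, p.length = n := by
  induction n with
  | zero =>
    intro a b h
    have : a = b := by omega
    subst this
    exact ⟨.nil, rfl⟩
  | succ n ih =>
    intro a b h
    rcases lt_or_gt_of_ne (show a ≠ b by omega) with hab | hab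
    · have hadj : twoWayPath.Adj a (a + 1) := (adj_iff _ _).2 (by omega)
      obtain ⟨p, hp⟩ := ih (a + 1) b (by omega)
      exact ⟨.cons hadj p, by simp [hp]⟩
    · have hadj : twoWayPath.Adj a (a - 1) := (adj_iff _ _).2 (by omega)
      obtain ⟨p, hp⟩ := ih (a - 1) b (by omega)
      exact ⟨.cons hadj p, by simp [hp]⟩

lemma walk_le {a b : ℤ} (p : twoWayPath.Walk a b) : (a - b).natAbs ≤ p.length := by
  induction p with
  | nil => simp
  | cons h q ih =>
    rename_i u x w
    have := (adj_iff _ _).1 h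
    simp only [SimpleGraph.Walk.length_cons]
    omega

lemma dist_eq (a b : ℤ) : twoWayPath.dist a b = (a - b).natAbs := by
  obtain ⟨p, hp⟩ := exists_walk _ a b rfl
  refine le_antisymm (hp ▸ SimpleGraph.dist_le p) ?_
  obtain ⟨q, hq⟩ := SimpleGraph.Reachable.exists_walk_length_eq_dist ⟨p⟩
  exact hq ▸ walk_le q



def col (n : ℤ) : Fin 3 :=
  if n = 0 then 2 else if 0 < n then (if n % 2 = 1 then 1 else 0)
  else (if n % 2 = 1 then 0 else 1)

lemma col_eq_two_iff (n : ℤ) : col n = 2 ↔ n = 0 := by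
  unfold col; split_ifs <;> simp_all

-- proper
lemma col_proper (a b : ℤ) (h : twoWayPath.Adj a b) : col a ≠ col b := by
  rw [adj_iff] at h
  unfold col; split_ifs <;> simp_all <;> omega

-- opposite neighbor: for v ≠ 0, there is x at distance 1 with col x the third color
lemma col_neg (v : ℤ) (hv : v ≠ 0) : col (-v) ≠ col v := by
  unfold col; split_ifs <;> simp_all <;> omega

lemma col_nbr (v : ℤ) (hv : v ≠ 0) :
    ∃ x, (v - x).natAbs = 1 ∧ col x ≠ col v ∧ col x ≠ 2 := by
  rcases lt_or_gt_of_ne hv with h | h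
  · exact ⟨v - 1, by omega, by unfold col; split_ifs <;> simp_all <;> omega,
      by simp [col_eq_two_iff]; omega⟩
  · exact ⟨v + 1, by omega, by unfold col; split_ifs <;> simp_all <;> omega,
      by simp [col_eq_two_iff]; omega⟩

lemma distClass_self {V : Type*} (G : SimpleGraph V) {t : ℕ} (c : V → Fin t) (v : V) :
    distClass G c v (c v) = 0 :=
  Nat.sInf_eq_zero.2 (Or.inl ⟨v, rfl, SimpleGraph.dist_self⟩)

lemma distClass_two (v : ℤ) : distClass twoWayPath col v 2 = v.natAbs := by
  unfold distClass
  have hset : {m : ℕ | ∃ x, col x = 2 ∧ twoWayPath.dist v x = m} = {v.natAbs} := by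
    ext m
    simp only [Set.mem_setOf_eq, Set.mem_singleton_iff]
    constructor
    · rintro ⟨x, hx, rfl⟩
      rw [col_eq_two_iff] at hx
      subst hx; rw [dist_eq]; omega
    · rintro rfl
      exact ⟨0, (col_eq_two_iff 0).2 rfl, by rw [dist_eq]; omega⟩
  rw [hset, csInf_singleton]

lemma distClass_other (v : ℤ) (hv : v ≠ 0) (i : Fin 3) (hi1 : i ≠ col v) (hi2 : i ≠ 2) :
    distClass twoWayPath col v i = 1 := by
  obtain ⟨x, hx1, hx2, hx3⟩ := col_nbr v hv
  have hcv : col v ≠ 2 := by simp [col_eq_two_iff]; exact hv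
  have hix : col x = i := by
    have b1 := i.isLt; have b2 := (col x).isLt; have b3 := (col v).isLt
    have h2 : ((2 : Fin 3)).val = 2 := rfl
    simp only [Ne, Fin.ext_iff] at hi1 hi2 hx2 hx3 hcv ⊢
    omega
  have h1 : (1 : ℕ) ∈ {m : ℕ | ∃ y, col y = i ∧ twoWayPath.dist v y = m} :=
    ⟨x, hix, by rw [dist_eq]; omega⟩
  have h0 : (0 : ℕ) ∉ {m : ℕ | ∃ y, col y = i ∧ twoWayPath.dist v y = m} := by
    rintro ⟨y, hy, hy0⟩
    rw [dist_eq] at hy0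
    have : y = v := by omega
    subst this
    exact hi1 hy.symm
  unfold distClass
  have hle := Nat.sInf_le h1
  have hmem := Nat.sInf_mem ⟨1, h1⟩
  interval_cases h : sInf {m : ℕ | ∃ y, col y = i ∧ twoWayPath.dist v y = m}
  · exact absurd (h ▸ hmem) h0
  · rfl


lemma locSInf_one {S : Set ℕ} (h1 : 1 ∈ S) (h0 : 0 ∉ S) : sInf S = 1 := by
  have hle := Nat.sInf_le h1
  have hmem := Nat.sInf_mem ⟨1, h1⟩
  interval_cases h : sInf S
  · exact absurd (h ▸ hmem) h0
  · rfl

theorem stmt_9 :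
    (∃ c : ℤ → Fin 3, IsLocatingColoring twoWayPath c) ∧
    ¬ (∃ c : ℤ → Fin 2, IsLocatingColoring twoWayPath c) := by
  constructor
  · refine ⟨col, col_proper, ?_⟩
    intro v w h
    have h2 := congrFun h (2 : Fin 3)
    simp only [distClass_two] at h2
    by_cases hv : v = 0
    · subst hv
      have : w.natAbs = 0 := h2.symm ▸ rfl
      omega
    · have hw : w ≠ 0 := by intro hw0; subst hw0; simp at h2; omega
      have hvw : w = v ∨ w = -v := by omega
      rcases hvw with rfl | rfl
      · rfl
      · exfalso
        have hcode := congrFun h (col v)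
        have hneg : col v ≠ col (-v) := fun e => col_neg v hv e.symm
        have hcv2 : col v ≠ 2 := by simp [col_eq_two_iff]; exact hv
        have hwv : distClass twoWayPath col (-v) (col v) = 1 :=
          distClass_other (-v) (by omega) (col v) hneg hcv2
        have hvv : distClass twoWayPath col v (col v) = 0 := distClass_self _ _ _
        simp only [hvv, hwv] at hcode
        exact absurd hcode (by omega)
  · rintro ⟨c, hproper, hinj⟩
    have hadj : ∀ v : ℤ, twoWayPath.Adj v (v + 1) := fun v => (adj_iff _ _).2 (by omega)
    have code : ∀ (v : ℤ) (i : Fin 2), distClass twoWayPath c v i = if i = c v then 0 else 1 := by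
      intro v i
      by_cases hi : i = c v
      · simp [hi, distClass_self]
      · simp only [hi, if_false]
        have hn : c (v + 1) ≠ c v := (hproper _ _ (hadj v)).symm
        have hix : c (v + 1) = i := by
          have b1 := i.isLt; have b2 := (c (v+1)).isLt; have b3 := (c v).isLt
          simp only [Ne, Fin.ext_iff] at hn hi ⊢
          omega
        unfold distClass
        apply locSInf_one
        · exact ⟨v + 1, hix, by rw [dist_eq]; omega⟩
        · rintro ⟨y, hy, hy0⟩
          rw [dist_eq] at hy0
          have : y = v := by omega
          subst this
          exact hi (hy ▸ rfl)
    have hc2 : c 2 = c 0 := by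
      have h01 : c 1 ≠ c 0 := hproper _ _ ((adj_iff _ _).2 (by omega))
      have h12 : c 2 ≠ c 1 := hproper _ _ ((adj_iff _ _).2 (by omega))
      have b1 := (c 0).isLt; have b2 := (c 1).isLt; have b3 := (c 2).isLt
      simp only [Ne, Fin.ext_iff] at h01 h12 ⊢
      omega
    have : (0 : ℤ) = 2 := hinj (funext fun i => by simp [code, hc2])
    omega
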